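/- arXiv:1511.00877 — 8 statements merged into one kernel-verified Lean document; each statement's English description precedes it below -/
import Mathlib

section
/- Let A be an n×n matrix over ℝ≥0, let λ ∈ ℝ≥0, and let x ∈ ℝ≥0^n be a nonzero vector with A⊗x = λ·x. Then: (a) every cycle lying in supp(x) of any length k ≥ 1 has weight at most λ^k in A; and (b) there exist k ≥ 1 and a cycle of length k lying in supp(x) whose weight in A equals exactly λ^k. (In other words, λ is the maximum cycle geometric mean of the subgraph of the weighted digraph of A induced by supp(x).) -/
/-! Along a cycle `σ` of length `k` in `supp x`, the identity
`weight(σ) · ∏ₜ x_{σ t} = ∏ₜ a_{σ t, σ (t+1)} x_{σ (t+1)}`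
(the product of `x` is invariant under rotating the cycle) compares the weight of `σ` with
`λ^k` edge by edge: every factor on the right is at most `λ x_{σ t}`, which gives (a).
For (b), following from each node of `supp x` an edge attaining the maximum in
`(A ⊗ x)_i = λ x_i` stays in `supp x` when `λ ≠ 0`; in a finite graph this walk runs into a
cycle, all of whose edges are tight, so its weight is exactly `λ^k`. When `λ = 0`, (a) already
forces any loop in `supp x` to have weight `0 = λ^1`. -/

open scoped NNReal ENNReal

noncomputable section

namespace MaxAlg

/-- Max-algebraic matrix–vector product over ℝ≥0: (A⊗x)_i = max_j a_{ij}·x_j. -/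
def mulVec {m n : ℕ} (A : Matrix (Fin m) (Fin n) ℝ≥0) (x : Fin n → ℝ≥0) :
    Fin m → ℝ≥0 :=
  fun i => Finset.univ.sup fun j => A i j * x j

/-- Support of a vector. -/
def supp {m : ℕ} (x : Fin m → ℝ≥0) : Set (Fin m) := {i | x i ≠ 0}

/-- Eigencone V(A,λ) = {x : A⊗x = λ·x}. -/
def eigencone {n : ℕ} (A : Matrix (Fin n) (Fin n) ℝ≥0) (lam : ℝ≥0) :
    Set (Fin n → ℝ≥0) :=
  {x | mulVec A x = fun i => lam * x i}

/-- A cycle of length `k ≥ 1` is encoded as `σ : ℕ → Fin n` with `σ k = σ 0`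
(standing for a function on ℤ/kℤ). -/
def IsCycle {n : ℕ} (k : ℕ) (σ : ℕ → Fin n) : Prop := 1 ≤ k ∧ σ k = σ 0

/-- The cycle lies in a set S: all its values belong to S. -/
def LiesIn {n : ℕ} (k : ℕ) (σ : ℕ → Fin n) (S : Set (Fin n)) : Prop :=
  ∀ t < k, σ t ∈ S

/-- Weight of a cycle in A: ∏_t a_{σ(t),σ(t+1)}. -/
def cycleWeight {n : ℕ} (A : Matrix (Fin n) (Fin n) ℝ≥0) (k : ℕ) (σ : ℕ → Fin n) : ℝ≥0 :=
  ∏ t ∈ Finset.range k, A (σ t) (σ (t + 1))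

/-- γ*_j(A,b): the greatest α ∈ [0,∞] with α·a_{ij} ≤ b_i for all i
(conventions 0·∞ = ∞·0 = 0 are built into ℝ≥0∞ multiplication). -/
def gammaStar {m n : ℕ} (A : Matrix (Fin m) (Fin n) ℝ≥0) (b : Fin m → ℝ≥0) (j : Fin n) :
    ℝ≥0∞ :=
  sSup {α : ℝ≥0∞ | ∀ i, α * (A i j : ℝ≥0∞) ≤ (b i : ℝ≥0∞)}

/-- M_j(A,b) = {i : a_{ij}·γ*_j(A,b) = b_i ≠ 0}. -/
def Mset {m n : ℕ} (A : Matrix (Fin m) (Fin n) ℝ≥0) (b : Fin m → ℝ≥0) (j : Fin n) :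
    Set (Fin m) :=
  {i | (A i j : ℝ≥0∞) * gammaStar A b j = (b i : ℝ≥0∞) ∧ b i ≠ 0}

/-- Max-algebraic column span of A. -/
def span {m n : ℕ} (A : Matrix (Fin m) (Fin n) ℝ≥0) : Set (Fin m → ℝ≥0) :=
  {y | ∃ c : Fin n → ℝ≥0, ∀ r, y r = Finset.univ.sup fun j => A r j * c j}

/-- Max-algebraic column span of A with its i-th column removed. -/
def spanMinus {m n : ℕ} (A : Matrix (Fin m) (Fin n) ℝ≥0) (i : Fin n) :
    Set (Fin m → ℝ≥0) :=
  {y | ∃ c : Fin n → ℝ≥0, ∀ r, y r = (Finset.univ.erase i).sup fun j => A r j * c j}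

/-- N^λ(A) = {i : ∃ x ∈ V(A,λ), x_i > 0}. -/
def Nlam {n : ℕ} (A : Matrix (Fin n) (Fin n) ℝ≥0) (lam : ℝ≥0) : Set (Fin n) :=
  {i | ∃ x ∈ eigencone A lam, 0 < x i}

/-- (i,j) is an edge of crit(A,λ). -/
def CritEdge {n : ℕ} (A : Matrix (Fin n) (Fin n) ℝ≥0) (lam : ℝ≥0) (i j : Fin n) : Prop :=
  ∃ k σ, IsCycle k σ ∧ LiesIn k σ (Nlam A lam) ∧ cycleWeight A k σ = lam ^ k ∧
    ∃ t < k, σ t = i ∧ σ (t + 1) = j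

/-- i is a critical node: some cycle lying in N^λ(A) with weight λ^k passes through i. -/
def CritNode {n : ℕ} (A : Matrix (Fin n) (Fin n) ℝ≥0) (lam : ℝ≥0) (i : Fin n) : Prop :=
  ∃ k σ, IsCycle k σ ∧ LiesIn k σ (Nlam A lam) ∧ cycleWeight A k σ = lam ^ k ∧
    ∃ t < k, σ t = i

/-- (i,j) is an edge of crit(A,x,λ). -/
def CritEdgeOn {n : ℕ} (A : Matrix (Fin n) (Fin n) ℝ≥0) (lam : ℝ≥0) (x : Fin n → ℝ≥0)
    (i j : Fin n) : Prop :=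
  ∃ k σ, IsCycle k σ ∧ LiesIn k σ (supp x) ∧ cycleWeight A k σ = lam ^ k ∧
    ∃ t < k, σ t = i ∧ σ (t + 1) = j

/-- x is a simple image eigenvector of A associated with λ. -/
def SimpleImageEig {n : ℕ} (A : Matrix (Fin n) (Fin n) ℝ≥0) (lam : ℝ≥0)
    (x : Fin n → ℝ≥0) : Prop :=
  x ∈ eigencone A lam ∧
    ∀ y : Fin n → ℝ≥0, mulVec A y = (fun i => lam * x i) → y = x

/-- The box (interval) determined by component intervals X_j. -/
def box {n : ℕ} (X : Fin n → Set ℝ≥0) : Set (Fin n → ℝ≥0) := {x | ∀ j, x j ∈ X j}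

/-- Each component set is a nonempty order-convex interval of ℝ≥0. -/
def IsInterval {n : ℕ} (X : Fin n → Set ℝ≥0) : Prop :=
  ∀ j, (X j).Nonempty ∧ (X j).OrdConnected

/-- A has X-simple image eigencone associated with λ. -/
def XSimple {n : ℕ} (A : Matrix (Fin n) (Fin n) ℝ≥0) (lam : ℝ≥0)
    (X : Fin n → Set ℝ≥0) : Prop :=
  ∀ x ∈ eigencone A lam ∩ box X,
    ∀ y ∈ box X, mulVec A y = (fun i => lam * x i) → y = x

theorem _root_.Function.exists_isPeriodicPt_iterate {α : Type*} [Finite α] (f : α → α)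
    (a : α) :
    ∃ s m, 0 < m ∧ Function.IsPeriodicPt f m (f^[s] a) := by
  obtain ⟨s, t, hst, heq⟩ := Finite.exists_ne_map_eq_of_infinite fun u => f^[u] a
  wlog hlt : s < t generalizing s t
  · exact this t s hst.symm heq.symm (hst.lt_or_gt.resolve_left hlt)
  refine ⟨s, t - s, Nat.sub_pos_of_lt hlt, ?_⟩
  rw [Function.IsPeriodicPt, Function.IsFixedPt, ← Function.iterate_add_apply,
    Nat.sub_add_cancel hlt.le]
  exact heq.symm

theorem _root_.Finset.prod_range_succ_eq_of_eq {M : Type*} [CommMonoid M] {f : ℕ → M} {k : ℕ}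
    (h : f k = f 0) : ∏ t ∈ Finset.range k, f (t + 1) = ∏ t ∈ Finset.range k, f t := by
  cases k with
  | zero => rfl
  | succ k => rw [Finset.prod_range_succ, Finset.prod_range_succ', h]

theorem _root_.Finset.pow_mul_prod_range {M : Type*} [CommMonoid M] (b : M) (f : ℕ → M)
    (k : ℕ) :
    b ^ k * ∏ t ∈ Finset.range k, f t = ∏ t ∈ Finset.range k, b * f t := by
  simpa using Finset.pow_card_mul_prod (s := Finset.range k) (f := f) (b := b)

section

variable {n : ℕ} (A : Matrix (Fin n) (Fin n) ℝ≥0) (x : Fin n → ℝ≥0)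

theorem mul_le_mulVec (i j : Fin n) : A i j * x j ≤ mulVec A x i :=
  Finset.le_sup (f := fun j => A i j * x j) (Finset.mem_univ j)

theorem exists_mul_eq_mulVec (i : Fin n) : ∃ j, A i j * x j = mulVec A x i := by
  obtain ⟨j, -, hj⟩ :=
    Finset.exists_mem_eq_sup Finset.univ ⟨i, Finset.mem_univ i⟩ fun j => A i j * x j
  exact ⟨j, hj.symm⟩

variable {A x} {lam : ℝ≥0} {k : ℕ} {σ : ℕ → Fin n}

theorem cycleWeight_mul_prod (hσ : σ k = σ 0) :
    cycleWeight A k σ * ∏ t ∈ Finset.range k, x (σ t) =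
      ∏ t ∈ Finset.range k, A (σ t) (σ (t + 1)) * x (σ (t + 1)) := by
  rw [Finset.prod_mul_distrib,
    Finset.prod_range_succ_eq_of_eq (f := fun t => x (σ t)) (by rw [hσ])]
  rfl

theorem prod_ne_zero_of_liesIn_supp (hS : LiesIn k σ (supp x)) :
    ∏ t ∈ Finset.range k, x (σ t) ≠ 0 :=
  Finset.prod_ne_zero_iff.mpr fun t ht => hS t (Finset.mem_range.mp ht)

theorem cycleWeight_le_pow (hsub : ∀ i j, A i j * x j ≤ lam * x i) (hσ : σ k = σ 0)
    (hS : LiesIn k σ (supp x)) : cycleWeight A k σ ≤ lam ^ k := by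
  refine le_of_mul_le_mul_right ?_ (pos_iff_ne_zero.mpr (prod_ne_zero_of_liesIn_supp hS))
  rw [cycleWeight_mul_prod hσ, Finset.pow_mul_prod_range]
  exact Finset.prod_le_prod' fun t _ => hsub _ _

theorem cycleWeight_eq_pow
    (htight : ∀ t < k, A (σ t) (σ (t + 1)) * x (σ (t + 1)) = lam * x (σ t))
    (hσ : σ k = σ 0) (hS : LiesIn k σ (supp x)) : cycleWeight A k σ = lam ^ k := by
  refine mul_right_cancel₀ (prod_ne_zero_of_liesIn_supp hS) ?_
  rw [cycleWeight_mul_prod hσ, Finset.pow_mul_prod_range]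
  exact Finset.prod_congr rfl fun t ht => htight t (Finset.mem_range.mp ht)

theorem exists_cycleWeight_eq_pow_of_ne_zero (hev : mulVec A x = fun i => lam * x i)
    (hlam : lam ≠ 0) {i₀ : Fin n} (hi₀ : x i₀ ≠ 0) :
    ∃ k σ, IsCycle k σ ∧ LiesIn k σ (supp x) ∧ cycleWeight A k σ = lam ^ k := by
  choose f hf using exists_mul_eq_mulVec A x
  simp only [hev] at hf
  have hmaps : Set.MapsTo f (supp x) (supp x) := fun i hi hfi =>
    mul_ne_zero hlam hi (by rw [← hf i, hfi, mul_zero])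
  obtain ⟨s, m, hm, hper⟩ := Function.exists_isPeriodicPt_iterate f i₀
  have hS : LiesIn m (fun u => f^[u] (f^[s] i₀)) (supp x) := fun u _ =>
    hmaps.iterate u (hmaps.iterate s hi₀)
  refine ⟨m, fun u => f^[u] (f^[s] i₀), ⟨hm, hper⟩, hS,
    cycleWeight_eq_pow (fun t _ => ?_) hper hS⟩
  rw [Function.iterate_succ_apply']
  exact hf _

end

/-- λ is the maximum cycle geometric mean of digr(A) restricted to supp(x),
for any nonzero eigenvector x associated with λ. -/
theorem stmt0 {n : ℕ} (A : Matrix (Fin n) (Fin n) ℝ≥0) (lam : ℝ≥0)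
    (x : Fin n → ℝ≥0) (hx : x ≠ 0)
    (hev : mulVec A x = fun i => lam * x i) :
    (∀ (k : ℕ) (σ : ℕ → Fin n), IsCycle k σ → LiesIn k σ (supp x) →
        cycleWeight A k σ ≤ lam ^ k) ∧
    (∃ (k : ℕ) (σ : ℕ → Fin n), IsCycle k σ ∧ LiesIn k σ (supp x) ∧
        cycleWeight A k σ = lam ^ k) := by
  have hsub : ∀ i j, A i j * x j ≤ lam * x i := fun i j =>
    (mul_le_mulVec A x i j).trans_eq (congrFun hev i)
  refine ⟨fun k σ hσ hS => cycleWeight_le_pow hsub hσ.2 hS, ?_⟩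
  obtain ⟨i₀, hi₀⟩ := Function.ne_iff.mp hx
  rcases eq_or_ne lam 0 with rfl | hlam
  · have hloop : LiesIn 1 (fun _ => i₀) (supp x) := fun _ _ => hi₀
    exact ⟨1, fun _ => i₀, ⟨le_rfl, rfl⟩, hloop,
      le_antisymm (cycleWeight_le_pow hsub rfl hloop) (by simp)⟩
  · exact exists_cycleWeight_eq_pow_of_ne_zero hev hlam hi₀

end MaxAlg

end
end

section
/- Let A be an n×n matrix over ℝ≥0, let λ > 0, and let x ∈ ℝ≥0^n satisfy A⊗x = λ·x. Then for all indices i, j: the pair (i,j) is an edge of crit(A,x,λ) if and only if (i,j) is an edge of crit(A,λ) and both x_i > 0 and x_j > 0. That is, crit(A,x,λ) equals the restriction of crit(A,λ) to supp(x). -/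
open scoped NNReal ENNReal

noncomputable section

namespace MaxAlg

section Cycles

variable {n k : ℕ} {σ : ℕ → Fin n} {S T : Set (Fin n)}

theorem LiesIn.mono (h : LiesIn k σ S) (hST : S ⊆ T) : LiesIn k σ T :=
  fun t ht => hST (h t ht)

theorem IsCycle.mem_of_liesIn (hσ : IsCycle k σ) (h : LiesIn k σ S) {t : ℕ} (ht : t ≤ k) :
    σ t ∈ S := by
  rcases ht.lt_or_eq with ht | rfl
  · exact h t ht
  · exact hσ.2 ▸ h 0 hσ.1

/-- Walking backwards from `t` reaches `0 ≡ k`, and from `k` every index below it. -/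
theorem IsCycle.liesIn_of_mem_of_pred (hσ : IsCycle k σ)
    (hpred : ∀ s < k, σ (s + 1) ∈ S → σ s ∈ S) {t : ℕ} (ht : t < k) (hmem : σ t ∈ S) :
    LiesIn k σ S := by
  have hdown : ∀ {m}, m ≤ k → σ m ∈ S → ∀ s ≤ m, σ s ∈ S := fun hm hmS s hs =>
    Nat.decreasingInduction' (P := fun s => σ s ∈ S)
      (fun s hs _ => hpred s (hs.trans_le hm)) hs hmS
  have hk : σ k ∈ S := hσ.2 ▸ hdown ht.le hmem 0 (Nat.zero_le t)
  exact fun s hs => hdown le_rfl hk s hs.le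

theorem edge_ne_zero_of_cycleWeight_ne_zero {A : Matrix (Fin n) (Fin n) ℝ≥0}
    (hw : cycleWeight A k σ ≠ 0) {s : ℕ} (hs : s < k) : A (σ s) (σ (s + 1)) ≠ 0 :=
  Finset.prod_ne_zero_iff.mp hw s (Finset.mem_range.mpr hs)

end Cycles

section Eigencone

variable {n : ℕ} {A : Matrix (Fin n) (Fin n) ℝ≥0} {lam : ℝ≥0} {x : Fin n → ℝ≥0}

theorem supp_subset_Nlam (hx : x ∈ eigencone A lam) : supp x ⊆ Nlam A lam :=
  fun _ hi => ⟨x, hx, pos_iff_ne_zero.mpr hi⟩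

theorem mul_le_of_mem_eigencone (hx : x ∈ eigencone A lam) (i j : Fin n) :
    A i j * x j ≤ lam * x i := by
  rw [← congrFun hx i]
  exact Finset.le_sup (f := fun j => A i j * x j) (Finset.mem_univ j)

theorem mem_supp_of_mem_supp_of_ne_zero (hx : x ∈ eigencone A lam) {i j : Fin n}
    (hij : A i j ≠ 0) (hj : j ∈ supp x) : i ∈ supp x := by
  intro hxi
  have hle := mul_le_of_mem_eigencone hx i j
  rw [hxi, mul_zero, nonpos_iff_eq_zero, mul_eq_zero] at hle
  exact hle.elim hij hj

/-- A cycle of positive weight has only positive edges, and the support of an eigenvector is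
closed under predecessors along positive edges. -/
theorem liesIn_supp_of_cycleWeight_eq (hlam : 0 < lam) (hx : x ∈ eigencone A lam) {k : ℕ}
    {σ : ℕ → Fin n} (hσ : IsCycle k σ) (hw : cycleWeight A k σ = lam ^ k) {t : ℕ} (ht : t < k)
    (hmem : σ t ∈ supp x) : LiesIn k σ (supp x) :=
  have hw : cycleWeight A k σ ≠ 0 := hw ▸ (pow_pos hlam k).ne'
  hσ.liesIn_of_mem_of_pred
    (fun _ hs => mem_supp_of_mem_supp_of_ne_zero hx
      (edge_ne_zero_of_cycleWeight_ne_zero hw hs)) ht hmem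

end Eigencone

/-- crit(A,x,λ) is the restriction of crit(A,λ) to supp(x). -/
theorem stmt2 {n : ℕ} (A : Matrix (Fin n) (Fin n) ℝ≥0) (lam : ℝ≥0) (hlam : 0 < lam)
    (x : Fin n → ℝ≥0) (hev : mulVec A x = fun i => lam * x i) :
    ∀ i j : Fin n,
      CritEdgeOn A lam x i j ↔ CritEdge A lam i j ∧ 0 < x i ∧ 0 < x j := by
  intro i j
  constructor
  · rintro ⟨k, σ, hσ, hlies, hw, t, ht, rfl, rfl⟩
    exact ⟨⟨k, σ, hσ, hlies.mono (supp_subset_Nlam hev), hw, t, ht, rfl, rfl⟩,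
      pos_iff_ne_zero.mpr (hlies t ht), pos_iff_ne_zero.mpr (hσ.mem_of_liesIn hlies ht)⟩
  · rintro ⟨⟨k, σ, hσ, -, hw, t, ht, rfl, rfl⟩, hxi, -⟩
    exact ⟨k, σ, hσ, liesIn_supp_of_cycleWeight_eq hlam hev hσ hw ht hxi.ne', hw, t, ht,
      rfl, rfl⟩

end MaxAlg

end
end

section
/- Let A be an m×n matrix over ℝ≥0 and b ∈ ℝ≥0^m. A vector x ∈ ℝ≥0^n satisfies A⊗x = b if and only if there exists a subset N' ⊆ {1,…,n} such that: (a) ⋃_{j∈N'} M_j(A,b) = supp(b); (b) N' is minimal with property (a), i.e. no proper subset of N' satisfies (a); (c) (x_j : [0,∞]) = γ*_j(A,b) for every j ∈ N'; and (d) (x_j : [0,∞]) ≤ γ*_j(A,b) for every j ∈ {1,…,n}. -/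
open scoped NNReal ENNReal

noncomputable section

namespace MaxAlg

/-! The greatest subsolution of `A ⊗ x ≤ b` is `γ*(A,b)`, so `x` solves `A ⊗ x = b` iff
`x ≤ γ*` and every `i ∈ supp b` is attained by some column `j`, i.e. `a_{ij} x_j = b_i`. Since
`a_{ij} x_j ≤ a_{ij} γ*_j ≤ b_i` and `a_{ij} ≠ 0`, attainment means exactly `x_j = γ*_j` and
`i ∈ M_j`. Hence the columns where `x` is tight cover `supp b`, and, the index set being finite,
this cover contains a minimal one; conversely a tight cover makes every `i ∈ supp b` attained. -/

section

variable {m n : ℕ} (A : Matrix (Fin m) (Fin n) ℝ≥0) (b : Fin m → ℝ≥0)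

theorem gammaStar_mul_le (j : Fin n) (i : Fin m) :
    gammaStar A b j * (A i j : ℝ≥0∞) ≤ b i := by
  rw [gammaStar, ENNReal.sSup_mul]
  exact iSup₂_le fun α hα => hα i

theorem le_gammaStar_iff {α : ℝ≥0∞} {j : Fin n} :
    α ≤ gammaStar A b j ↔ ∀ i, α * A i j ≤ b i :=
  ⟨fun h i => (mul_le_mul_left h _).trans (gammaStar_mul_le A b j i), fun h => le_sSup h⟩

theorem coe_le_gammaStar_iff {c : ℝ≥0} {j : Fin n} :
    (c : ℝ≥0∞) ≤ gammaStar A b j ↔ ∀ i, A i j * c ≤ b i := by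
  simp only [le_gammaStar_iff, mul_comm c, ← ENNReal.coe_mul, ENNReal.coe_le_coe]

theorem mulVec_le_iff {x : Fin n → ℝ≥0} :
    mulVec A x ≤ b ↔ ∀ j, (x j : ℝ≥0∞) ≤ gammaStar A b j := by
  simp only [coe_le_gammaStar_iff, Pi.le_def, mulVec, Finset.sup_le_iff, Finset.mem_univ,
    true_implies]
  exact forall_comm

theorem Mset_subset_supp (j : Fin n) : Mset A b j ⊆ supp b := fun _ hi => hi.2

theorem mul_eq_iff_of_le_gammaStar {c : ℝ≥0} {i : Fin m} {j : Fin n}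
    (hc : (c : ℝ≥0∞) ≤ gammaStar A b j) (hb : b i ≠ 0) :
    A i j * c = b i ↔ (c : ℝ≥0∞) = gammaStar A b j ∧ i ∈ Mset A b j := by
  constructor
  · intro h
    have hA : (A i j : ℝ≥0∞) ≠ 0 := by
      rintro hA
      exact hb (by rw [← h, ENNReal.coe_eq_zero.mp hA, zero_mul])
    have h' : (A i j : ℝ≥0∞) * c = b i := by exact_mod_cast h
    have hγ : (A i j : ℝ≥0∞) * gammaStar A b j = b i :=
      le_antisymm (mul_comm (A i j : ℝ≥0∞) _ ▸ gammaStar_mul_le A b j i)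
        (h' ▸ mul_le_mul_right hc _)
    exact ⟨(ENNReal.mul_right_inj hA ENNReal.coe_ne_top).mp (h'.trans hγ.symm), hγ, hb⟩
  · rintro ⟨hc, hγ, -⟩
    exact_mod_cast hc ▸ hγ

theorem mulVec_eq_iff {x : Fin n → ℝ≥0} :
    mulVec A x = b ↔ (∀ j, (x j : ℝ≥0∞) ≤ gammaStar A b j) ∧
      ∀ i ∈ supp b, ∃ j, (x j : ℝ≥0∞) = gammaStar A b j ∧ i ∈ Mset A b j := by
  constructor
  · intro h
    have hle := (mulVec_le_iff A b).mp h.le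
    refine ⟨hle, fun i hi => ?_⟩
    obtain ⟨j, -, hj⟩ := (Finset.le_sup_iff (pos_iff_ne_zero.mpr hi)).mp (congrFun h i).ge
    have hji : A i j * x j ≤ b i := (coe_le_gammaStar_iff A b).mp (hle j) i
    exact ⟨j, (mul_eq_iff_of_le_gammaStar A b (hle j) hi).mp (hji.antisymm hj)⟩
  · rintro ⟨hle, hatt⟩
    refine le_antisymm ((mulVec_le_iff A b).mpr hle) fun i => ?_
    by_cases hi : b i = 0
    · simp [hi]
    obtain ⟨j, hj⟩ := hatt i hi
    calc b i = A i j * x j := ((mul_eq_iff_of_le_gammaStar A b (hle j) hi).mpr hj).symm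
      _ ≤ mulVec A x i := Finset.le_sup (f := fun j => A i j * x j) (Finset.mem_univ j)

end

/-- description of the solution set of A⊗x = b via minimal coverings. -/
theorem stmt4 {m n : ℕ} (A : Matrix (Fin m) (Fin n) ℝ≥0) (b : Fin m → ℝ≥0)
    (x : Fin n → ℝ≥0) :
    mulVec A x = b ↔
      ∃ N' : Set (Fin n),
        (⋃ j ∈ N', Mset A b j) = supp b ∧
        (∀ N'' : Set (Fin n), N'' ⊂ N' → (⋃ j ∈ N'', Mset A b j) ≠ supp b) ∧
        (∀ j ∈ N', (x j : ℝ≥0∞) = gammaStar A b j) ∧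
        (∀ j : Fin n, (x j : ℝ≥0∞) ≤ gammaStar A b j) := by
  rw [mulVec_eq_iff]
  constructor
  · rintro ⟨hle, hatt⟩
    have htight_cover :
        (⋃ j ∈ {j | (x j : ℝ≥0∞) = gammaStar A b j}, Mset A b j) = supp b := by
      refine (Set.iUnion₂_subset fun j _ => Mset_subset_supp A b j).antisymm fun i hi => ?_
      obtain ⟨j, hj, hi⟩ := hatt i hi
      exact Set.mem_biUnion hj hi
    obtain ⟨N', hN', hmin⟩ := exists_minimal_le_of_wellFoundedLT
      (fun N : Set (Fin n) => (⋃ j ∈ N, Mset A b j) = supp b) _ htight_cover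
    exact ⟨N', hmin.prop, fun _ hlt => hmin.not_prop_of_lt hlt, fun _ hj => hN' hj, hle⟩
  · rintro ⟨N', hcover, -, htight, hle⟩
    refine ⟨hle, fun i hi => ?_⟩
    rw [← hcover, Set.mem_iUnion₂] at hi
    obtain ⟨j, hj, hi⟩ := hi
    exact ⟨j, htight j hj, hi⟩

end MaxAlg

end
end

section
/- Let n ≥ 1 and let E be a relation on {1,…,n} (a digraph) which is strongly connected in the sense that for all nodes i, j there is a nonempty E-path from i to j (i.e. Relation.TransGen E i j holds for all i, j). Then the following are equivalent: (1) there exists a node i such that every node k has an edge to some node j with j ≠ i (i.e. ⋃_{j≠i} M_j(E) = {1,…,n}, where M_j(E) is the set of in-neighbours of j); (2) it is not the case that every node has exactly one outgoing edge (the latter condition, under strong connectivity, means precisely that the digraph is a single cycle through all its nodes). -/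
open scoped NNReal ENNReal

noncomputable section

namespace MaxAlg

/-
In a strongly connected digraph every node has both an in- and an out-neighbour. If some node i
has an in-neighbour m and every node has an out-neighbour other than i, then m has two
out-neighbours. Conversely, if for every i some node f i has no out-neighbour but i, then f i has
exactly the out-neighbour i, so f is injective, hence (by finiteness) surjective, and every node has
exactly one out-neighbour.
-/

section Digraph

variable {α : Type*} {E : α → α → Prop}

theorem exists_rel_from_of_transGen {a b : α} (h : Relation.TransGen E a b) : ∃ c, E a c :=
  let ⟨c, hc, _⟩ := Relation.TransGen.head'_iff.mp h
  ⟨c, hc⟩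

theorem exists_rel_to_of_transGen {a b : α} (h : Relation.TransGen E a b) : ∃ c, E c b :=
  let ⟨c, _, hc⟩ := Relation.TransGen.tail'_iff.mp h
  ⟨c, hc⟩

theorem not_forall_existsUnique_of_forall_exists_ne {i m : α} (hm : E m i)
    (hi : ∀ k, ∃ j, j ≠ i ∧ E k j) : ¬ ∀ k, ∃! j, E k j := fun huniq =>
  let ⟨_, hji, hmj⟩ := hi m
  hji ((huniq m).unique hmj hm)

theorem exists_forall_exists_ne_of_not_forall_existsUnique [Finite α]
    (hout : ∀ k, ∃ j, E k j) (h : ¬ ∀ k, ∃! j, E k j) : ∃ i, ∀ k, ∃ j, j ≠ i ∧ E k j := by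
  by_contra! hc
  choose f hf using hc
  have hf_eq {i j : α} (hj : E (f i) j) : j = i := by_contra fun hne => hf i j hne hj
  have hf_inj : Function.Injective f := fun a b hab =>
    let ⟨_, hj⟩ := hout (f a)
    (hf_eq hj).symm.trans (hf_eq (hab ▸ hj))
  refine h fun k => ?_
  obtain ⟨i, rfl⟩ := Finite.surjective_of_injective hf_inj k
  obtain ⟨j, hj⟩ := hout (f i)
  exact ⟨j, hj, fun y hy => (hf_eq hy).trans (hf_eq hj).symm⟩

end Digraph

theorem stmt6_general {n : ℕ} (E : Fin n → Fin n → Prop)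
    (hsc : ∀ i j : Fin n, Relation.TransGen E i j) :
    (∃ i : Fin n, ∀ k : Fin n, ∃ j : Fin n, j ≠ i ∧ E k j) ↔
      ¬ (∀ k : Fin n, ∃! j : Fin n, E k j) := by
  constructor
  · rintro ⟨i, hi⟩
    obtain ⟨m, hm⟩ := exists_rel_to_of_transGen (hsc i i)
    exact not_forall_existsUnique_of_forall_exists_ne hm hi
  · exact exists_forall_exists_ne_of_not_forall_existsUnique
      fun k => exists_rel_from_of_transGen (hsc k k)

/-- covering the nodes of a strongly connected digraph by ingoing
edges avoiding one node, iff the digraph is not a single cycle. -/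
theorem stmt6 {n : ℕ} (hn : 1 ≤ n) (E : Fin n → Fin n → Prop)
    (hsc : ∀ i j : Fin n, Relation.TransGen E i j) :
    (∃ i : Fin n, ∀ k : Fin n, ∃ j : Fin n, j ≠ i ∧ E k j) ↔
      ¬ (∀ k : Fin n, ∃! j : Fin n, E k j) :=
  stmt6_general E hsc

end MaxAlg

end
end

section
/- Let A be an n×n matrix over ℝ≥0 and λ > 0. Then the following are equivalent: (1) A is weakly λ-robust, i.e. every x ∈ ℝ≥0^n for which A^{⊗t}⊗x ∈ V(A,λ) for some t ≥ 1 already satisfies x ∈ V(A,λ); (2) every x ∈ V(A,λ) is a simple image eigenvector of A associated with λ, i.e. for every x with A⊗x = λ·x, the only y ∈ ℝ≥0^n with A⊗y = λ·x is y = x. -/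
open scoped NNReal ENNReal

noncomputable section

namespace MaxAlg

/-
If `A ⊗ y = λ x` with `x ∈ V(A, λ)`, then `A ⊗ y` is an eigenvector, so robustness puts `y` in
`V(A, λ)` and `λ y = λ x`. Conversely, if `A ⊗ w ∈ V(A, λ)` then `λ w` is a preimage of
`λ (A ⊗ w)`, so simplicity gives `λ w = A ⊗ w` and `w` is an eigenvector; applying this `t` times
pulls `A^{⊗t} ⊗ x ∈ V(A, λ)` back to `x`.
-/

section

variable {m n : ℕ}

lemma mulVec_const_mul (A : Matrix (Fin m) (Fin n) ℝ≥0) (c : ℝ≥0) (x : Fin n → ℝ≥0) :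
    mulVec A (fun j => c * x j) = fun i => c * mulVec A x i := by
  funext i
  simp only [mulVec, NNReal.mul_finset_sup, mul_left_comm]

lemma const_mul_mem_eigencone {A : Matrix (Fin n) (Fin n) ℝ≥0} {lam : ℝ≥0} (c : ℝ≥0)
    {x : Fin n → ℝ≥0} (hx : x ∈ eigencone A lam) :
    (fun j => c * x j) ∈ eigencone A lam := by
  change mulVec A _ = _
  rw [mulVec_const_mul, show mulVec A x = _ from hx]
  funext i
  ring

lemma eq_of_mem_eigencone_of_mulVec_eq {A : Matrix (Fin n) (Fin n) ℝ≥0} {lam : ℝ≥0}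
    (hlam : lam ≠ 0) {x y : Fin n → ℝ≥0} (hy : y ∈ eigencone A lam)
    (hxy : mulVec A y = fun i => lam * x i) : y = x :=
  funext fun i => mul_left_cancel₀ hlam (congrFun ((show mulVec A y = _ from hy).symm.trans hxy) i)

lemma mem_eigencone_of_mulVec_mem {A : Matrix (Fin n) (Fin n) ℝ≥0} {lam : ℝ≥0}
    (hlam : lam ≠ 0)
    (hsimple : ∀ x ∈ eigencone A lam,
      ∀ y : Fin n → ℝ≥0, mulVec A y = (fun i => lam * x i) → y = x)
    {w : Fin n → ℝ≥0} (hw : mulVec A w ∈ eigencone A lam) : w ∈ eigencone A lam := by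
  have hlw : (fun j => lam * w j) = mulVec A w := hsimple _ hw _ (mulVec_const_mul A lam w)
  have hw_eq : w = fun j => lam⁻¹ * mulVec A w j := by
    funext j
    rw [← congrFun hlw j, ← mul_assoc, inv_mul_cancel₀ hlam, one_mul]
  rw [hw_eq]
  exact const_mul_mem_eigencone lam⁻¹ hw

end

/-- A is weakly λ-robust iff every eigenvector is a simple image
eigenvector. -/
theorem stmt10 {n : ℕ} (A : Matrix (Fin n) (Fin n) ℝ≥0) (lam : ℝ≥0) (hlam : 0 < lam) :
    (∀ x : Fin n → ℝ≥0,
        (∃ t : ℕ, 1 ≤ t ∧ (mulVec A)^[t] x ∈ eigencone A lam) →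
          x ∈ eigencone A lam) ↔
      (∀ x ∈ eigencone A lam,
        ∀ y : Fin n → ℝ≥0, mulVec A y = (fun i => lam * x i) → y = x) := by
  constructor
  · intro hrobust x hx y hy
    refine eq_of_mem_eigencone_of_mulVec_eq hlam.ne' (hrobust y ⟨1, le_rfl, ?_⟩) hy
    rw [Function.iterate_one, hy]
    exact const_mul_mem_eigencone lam hx
  · rintro hsimple x ⟨t, -, hxt⟩
    have hcompl : Set.MapsTo (mulVec A) (eigencone A lam)ᶜ (eigencone A lam)ᶜ :=
      fun w hw hAw => hw (mem_eigencone_of_mulVec_mem hlam.ne' hsimple hAw)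
    by_contra hx
    exact hcompl.iterate t hx hxt

end MaxAlg

end
end

section
/- Let A be an n×n matrix over ℝ≥0 and let X ⊆ ℝ≥0^n be an interval, i.e. X = {x : x_j ∈ X_j for all j} where each X_j ⊆ ℝ≥0 is nonempty and order-convex. Suppose that A has X-simple image eigencone associated with the eigenvalue λ = 1 (i.e. for every x ∈ X with A⊗x = x, the only y ∈ X with A⊗y = x is y = x), and that X is invariant under A (x ∈ X implies A⊗x ∈ X). Then A is weakly (X,1)-robust: every x ∈ X such that A^{⊗t}⊗x ∈ V(A,1) for some t ≥ 1 satisfies A⊗x = x. -/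
open scoped NNReal ENNReal

noncomputable section

namespace MaxAlg

/-! If `A ⊗ x` is a fixed point of `A`, then `x ∈ X` is a preimage of the eigenvector `A ⊗ x`,
and X-simplicity forces `x = A ⊗ x`. Since `X` is invariant, this applies to every
`A^{⊗s} ⊗ x`, so a fixed point reached after `t` steps is already reached after one. -/

section Robustness

variable {n : ℕ} {A : Matrix (Fin n) (Fin n) ℝ≥0} {X : Fin n → Set ℝ≥0} {x : Fin n → ℝ≥0}

theorem mem_eigencone_one_iff :
    x ∈ eigencone A 1 ↔ mulVec A x = x := by
  simp only [eigencone, Set.mem_ofPred_eq, one_mul]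

theorem mulVec_eq_self_of_mulVec_mem_eigencone (hsimple : XSimple A 1 X)
    (hinv : ∀ x ∈ box X, mulVec A x ∈ box X) (hx : x ∈ box X)
    (hAx : mulVec A x ∈ eigencone A 1) : mulVec A x = x :=
  (hsimple (mulVec A x) ⟨hAx, hinv x hx⟩ x hx (by simp only [one_mul])).symm

theorem mulVec_eq_self_of_iterate_mem_eigencone (hsimple : XSimple A 1 X)
    (hinv : ∀ x ∈ box X, mulVec A x ∈ box X) (t : ℕ) (hx : x ∈ box X)
    (ht : (mulVec A)^[t + 1] x ∈ eigencone A 1) : mulVec A x = x := by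
  induction t generalizing x with
  | zero => exact mulVec_eq_self_of_mulVec_mem_eigencone hsimple hinv hx ht
  | succ t ih =>
    rw [Function.iterate_succ_apply] at ht
    exact mulVec_eq_self_of_mulVec_mem_eigencone hsimple hinv hx
      (mem_eigencone_one_iff.mpr (ih (hinv x hx) ht))

end Robustness

theorem stmt12_general {n : ℕ} (A : Matrix (Fin n) (Fin n) ℝ≥0)
    (X : Fin n → Set ℝ≥0)
    (hsimple : XSimple A 1 X)
    (hinv : ∀ x ∈ box X, mulVec A x ∈ box X) :
    ∀ x ∈ box X,
      (∃ t : ℕ, 1 ≤ t ∧ (mulVec A)^[t] x ∈ eigencone A 1) →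
        mulVec A x = x := by
  rintro x hx ⟨t, ht, hmem⟩
  obtain ⟨s, rfl⟩ : ∃ s, t = s + 1 := ⟨t - 1, by omega⟩
  exact mulVec_eq_self_of_iterate_mem_eigencone hsimple hinv s hx hmem

/-- X-simple image eigencone plus invariance of X implies weak
(X,1)-robustness. -/
theorem stmt12 {n : ℕ} (A : Matrix (Fin n) (Fin n) ℝ≥0)
    (X : Fin n → Set ℝ≥0) (hX : IsInterval X)
    (hsimple : XSimple A 1 X)
    (hinv : ∀ x ∈ box X, mulVec A x ∈ box X) :
    ∀ x ∈ box X,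
      (∃ t : ℕ, 1 ≤ t ∧ (mulVec A)^[t] x ∈ eigencone A 1) →
        mulVec A x = x :=
  stmt12_general A X hsimple hinv

end MaxAlg

end
end

section
/- Let A be an m×n matrix over ℝ≥0 and let X ⊆ ℝ≥0^m be an interval X = {y : y_i ∈ X_i for all i} (each X_i ⊆ ℝ≥0 nonempty and order-convex) which is x̄-closed, i.e. it possesses a greatest element x̄ ∈ X with y ≤ x̄ for all y ∈ X. Suppose z ∈ ℝ≥0^m satisfies: z ∈ span(A), z ≤ x̄, and y ≤ z for every y ∈ span(A) with y ≤ x̄ (so z is the max-algebraic projection P_A(x̄) of x̄ onto span(A)). Then X ∩ span(A) is nonempty if and only if z ∈ X. -/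
open scoped NNReal ENNReal

noncomputable section

namespace MaxAlg

theorem box_eq_pi {n : ℕ} (X : Fin n → Set ℝ≥0) : box X = Set.univ.pi X := by
  ext x
  simp [box]

theorem ordConnected_box {n : ℕ} {X : Fin n → Set ℝ≥0} (hX : ∀ j, (X j).OrdConnected) :
    (box X).OrdConnected :=
  box_eq_pi X ▸ Set.ordConnected_pi fun j _ => hX j

/-- an x̄-closed interval meets span(A) iff the projection of x̄
onto span(A) lies in the interval. -/
theorem stmt16 {m n : ℕ} (A : Matrix (Fin m) (Fin n) ℝ≥0)
    (X : Fin m → Set ℝ≥0) (hX : IsInterval X)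
    (xbar : Fin m → ℝ≥0) (hxbar : xbar ∈ box X)
    (hgreatest : ∀ y ∈ box X, y ≤ xbar)
    (z : Fin m → ℝ≥0) (hz : z ∈ span A) (hzle : z ≤ xbar)
    (hzmax : ∀ y ∈ span A, y ≤ xbar → y ≤ z) :
    (box X ∩ span A).Nonempty ↔ z ∈ box X := by
  constructor
  · rintro ⟨y, hyX, hyA⟩
    have hyz : y ≤ z := hzmax y hyA (hgreatest y hyX)
    exact (ordConnected_box fun j => (hX j).2).out hyX hxbar ⟨hyz, hzle⟩
  · exact fun hzX => ⟨z, hzX, hz⟩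

end MaxAlg

end
end

section
/- Let A be an n×n matrix over ℝ≥0, λ > 0, and let X ⊆ ℝ≥0^n be an interval, X = {x : x_j ∈ X_j for all j} with each X_j ⊆ ℝ≥0 nonempty and order-convex, which is x̲-open: inf X_j ∉ X_j for every j. Assume V(A,λ) ∩ X ≠ ∅. Then A has X-simple image eigencone associated with λ if and only if span(A^{(i)}) ∩ V(A,λ) ∩ X = ∅ for every i = 1,…,n. -/
open scoped NNReal ENNReal

noncomputable section

namespace MaxAlg

/-! `A ⊗ update u j 0` is `A ⊗ u` with column `j` deleted. If `A ⊗ y = λx` with `y ≠ x`, a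
coordinate `j` where they differ is superfluous in whichever of `A ⊗ y`, `A ⊗ x` has the smaller
`j`-th entry, so `x ∈ span(A^{(j)})`. Conversely, if an eigenvector `x ∈ X` lies in
`span(A^{(i)})`, comparing the two representations of `λx` shows that some column `j` is
superfluous for `x` itself; lowering `x_j` to a smaller value of `X_j`, which exists because `X` is
x̲-open, then gives a second preimage of `λx` in `X`. -/

open Function

lemma csInf_lt_of_mem_of_csInf_notMem {α : Type*} [ConditionallyCompleteLinearOrderBot α]
    {S : Set α} (hS : sInf S ∉ S) {t : α} (ht : t ∈ S) : sInf S < t :=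
  (csInf_le (OrderBot.bddBelow S) ht).lt_of_ne fun h => hS (h ▸ ht)

lemma exists_lt_of_mem_box {n : ℕ} {X : Fin n → Set ℝ≥0} (hopen : ∀ j, sInf (X j) ∉ X j)
    {x : Fin n → ℝ≥0} (hx : x ∈ box X) (j : Fin n) : ∃ t ∈ X j, t < x j :=
  exists_lt_of_csInf_lt ⟨_, hx j⟩ (csInf_lt_of_mem_of_csInf_notMem (hopen j) (hx j))

lemma update_mem_box {n : ℕ} {X : Fin n → Set ℝ≥0} {x : Fin n → ℝ≥0} (hx : x ∈ box X)
    {j : Fin n} {t : ℝ≥0} (ht : t ∈ X j) : update x j t ∈ box X := by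
  intro k
  rcases eq_or_ne k j with rfl | hk
  · simpa using ht
  · simpa [hk] using hx k

section mulVec

variable {m n : ℕ} (A : Matrix (Fin m) (Fin n) ℝ≥0)

lemma le_mulVec (u : Fin n → ℝ≥0) (r : Fin m) (j : Fin n) : A r j * u j ≤ mulVec A u r :=
  Finset.le_sup (f := fun k => A r k * u k) (Finset.mem_univ j)

lemma mulVec_mono {u v : Fin n → ℝ≥0} (h : u ≤ v) : mulVec A u ≤ mulVec A v :=
  fun _ => Finset.sup_mono_fun fun k _ => mul_le_mul_right (h k) _

lemma mulVec_smul (a : ℝ≥0) (u : Fin n → ℝ≥0) : mulVec A (a • u) = a • mulVec A u := by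
  funext r
  simp only [mulVec, Pi.smul_apply, smul_eq_mul, NNReal.mul_finset_sup, mul_left_comm]

lemma mulVec_apply_eq_sup_erase (u : Fin n → ℝ≥0) (j : Fin n) (r : Fin m) :
    mulVec A u r = A r j * u j ⊔ (Finset.univ.erase j).sup fun k => A r k * u k := by
  rw [← Finset.sup_insert (f := fun k => A r k * u k), Finset.insert_erase (Finset.mem_univ j)]
  rfl

lemma mulVec_update_zero_apply (u : Fin n → ℝ≥0) (j : Fin n) (r : Fin m) :
    mulVec A (update u j 0) r = (Finset.univ.erase j).sup fun k => A r k * u k := by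
  rw [mulVec_apply_eq_sup_erase A _ j, update_self, mul_zero, sup_of_le_right zero_le]
  exact Finset.sup_congr rfl fun k hk => by rw [update_of_ne (Finset.ne_of_mem_erase hk)]

lemma mulVec_apply_eq_sup_update_zero (u : Fin n → ℝ≥0) (j : Fin n) (r : Fin m) :
    mulVec A u r = A r j * u j ⊔ mulVec A (update u j 0) r := by
  rw [mulVec_update_zero_apply, mulVec_apply_eq_sup_erase A u j]

lemma mem_spanMinus_iff {x : Fin m → ℝ≥0} {i : Fin n} :
    x ∈ spanMinus A i ↔ ∃ z : Fin n → ℝ≥0, z i = 0 ∧ mulVec A z = x := by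
  constructor
  · rintro ⟨c, hc⟩
    exact ⟨update c i 0, update_self ..,
      funext fun r => (mulVec_update_zero_apply A c i r).trans (hc r).symm⟩
  · rintro ⟨z, hzi, rfl⟩
    refine ⟨z, fun r => ?_⟩
    rw [← mulVec_update_zero_apply, ← hzi, update_eq_self]

/-- A positive `a_rj` gives `a_rj u_j < a_rj v_j ≤ b_r`, so the `j`-term never attains a row
maximum of `A ⊗ u` on its own. -/
lemma mulVec_update_zero_eq_of_lt {u v : Fin n → ℝ≥0} {b : Fin m → ℝ≥0} (hu : mulVec A u = b)
    (hv : mulVec A v ≤ b) {j : Fin n} (huv : u j < v j) : mulVec A (update u j 0) = b := by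
  funext r
  have hsplit := mulVec_apply_eq_sup_update_zero A u j r
  rw [congrFun hu r] at hsplit
  refine le_antisymm ?_ (hsplit.le.trans (sup_le ?_ le_rfl))
  · exact hu ▸ mulVec_mono A (update_le_iff.2 ⟨zero_le, fun k _ => le_rfl⟩) r
  · rcases (zero_le (a := A r j)).eq_or_lt with hA | hA
    · simp [← hA]
    by_contra! hlt
    have hbr : b r = A r j * u j := by rw [hsplit, sup_eq_left.2 hlt.le]
    exact (mul_lt_mul_of_pos_left huv hA).not_ge (hbr ▸ (le_mulVec A v r j).trans (hv r))

lemma mulVec_update_eq_of_le {u : Fin n → ℝ≥0} {b : Fin m → ℝ≥0} (hu : mulVec A u = b)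
    {j : Fin n} (hj : mulVec A (update u j 0) = b) {t : ℝ≥0} (ht : t ≤ u j) :
    mulVec A (update u j t) = b :=
  le_antisymm (hu ▸ mulVec_mono A (update_le_iff.2 ⟨ht, fun _ _ => le_rfl⟩))
    (hj ▸ mulVec_mono A (update_le_update_iff.2 ⟨zero_le, fun _ _ => le_rfl⟩))

/-- Either some `x j < z j`, and column `j` is superfluous for `x`, or `z ≤ update x i 0`,
and then column `i` is. -/
lemma exists_mulVec_update_zero_eq {x z : Fin n → ℝ≥0} {b : Fin m → ℝ≥0} (hx : mulVec A x = b)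
    (hz : mulVec A z = b) {i : Fin n} (hzi : z i = 0) :
    ∃ j, mulVec A (update x j 0) = b := by
  by_cases h : ∃ j, x j < z j
  · obtain ⟨j, hj⟩ := h
    exact ⟨j, mulVec_update_zero_eq_of_lt A hx hz.le hj⟩
  · push Not at h
    refine ⟨i, le_antisymm ?_ ?_⟩
    · exact hx ▸ mulVec_mono A (update_le_iff.2 ⟨zero_le, fun k _ => le_rfl⟩)
    · exact hz ▸ mulVec_mono A (le_update_iff.2 ⟨hzi.le, fun k _ => h k⟩)

lemma mem_spanMinus_of_mulVec_update_zero {u : Fin n → ℝ≥0} {x : Fin m → ℝ≥0} {lam : ℝ≥0}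
    (hlam : lam ≠ 0) {j : Fin n} (h : mulVec A (update u j 0) = lam • x) :
    x ∈ spanMinus A j := by
  refine (mem_spanMinus_iff A).2 ⟨lam⁻¹ • update u j 0, by simp, ?_⟩
  rw [mulVec_smul, h, smul_smul, inv_mul_cancel₀ hlam, one_smul]

end mulVec

theorem stmt18_general {n : ℕ} (A : Matrix (Fin n) (Fin n) ℝ≥0) (lam : ℝ≥0) (hlam : 0 < lam)
    (X : Fin n → Set ℝ≥0)
    (hopen : ∀ j : Fin n, sInf (X j) ∉ X j) :
    XSimple A lam X ↔
      ∀ i : Fin n,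
        ¬ ∃ x : Fin n → ℝ≥0,
          x ∈ spanMinus A i ∧ x ∈ eigencone A lam ∧ x ∈ box X := by
  constructor
  · rintro hsimple i ⟨x, hspan, hxe, hxX⟩
    obtain ⟨z, hzi, hz⟩ := (mem_spanMinus_iff A).1 hspan
    have hlz : mulVec A (lam • z) = lam • x := by rw [mulVec_smul, hz]
    obtain ⟨j, hj⟩ := exists_mulVec_update_zero_eq A hxe hlz (i := i) (by simp [hzi])
    obtain ⟨t, htX, htx⟩ := exists_lt_of_mem_box hopen hxX j
    have hy := hsimple x ⟨hxe, hxX⟩ _ (update_mem_box hxX htX)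
      (mulVec_update_eq_of_le A hxe hj htx.le)
    exact htx.ne (by simpa using congrFun hy j)
  · rintro hnone x ⟨hxe, hxX⟩ y hyX hy
    by_contra hyx
    obtain ⟨j, hj⟩ := Function.ne_iff.1 hyx
    refine hnone j ⟨x, ?_, hxe, hxX⟩
    rcases hj.lt_or_gt with hlt | hlt
    · exact mem_spanMinus_of_mulVec_update_zero A hlam.ne'
        (mulVec_update_zero_eq_of_lt A hy (le_of_eq hxe) hlt)
    · exact mem_spanMinus_of_mulVec_update_zero A hlam.ne'
        (mulVec_update_zero_eq_of_lt A hxe (le_of_eq hy) hlt)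

/-- X-simple image eigencone for an x̲-open interval. -/
theorem stmt18 {n : ℕ} (A : Matrix (Fin n) (Fin n) ℝ≥0) (lam : ℝ≥0) (hlam : 0 < lam)
    (X : Fin n → Set ℝ≥0) (hX : IsInterval X)
    (hopen : ∀ j : Fin n, sInf (X j) ∉ X j)
    (hne : (eigencone A lam ∩ box X).Nonempty) :
    XSimple A lam X ↔
      ∀ i : Fin n,
        ¬ ∃ x : Fin n → ℝ≥0,
          x ∈ spanMinus A i ∧ x ∈ eigencone A lam ∧ x ∈ box X :=
  stmt18_general A lam hlam X hopen

end MaxAlg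

end
end
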